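/- arXiv:1911.04980 — 2 statements merged into one kernel-verified Lean document; each statement's English description precedes it below -/
import Mathlib

section
/- Let (A, ρ, [.,.]) be a skew algebroid and Π a bivector field on A. Then for all sections α, β, γ of A*: γ(♯_Π([α,β]_Π) − [♯_Π(α), ♯_Π(β)]) = (1/2)[Π,Π](α,β,γ). Consequently, if [Π,Π] = 0 and (A,ρ,[.,.]) is an almost Lie algebroid, then (A*, ρ_Π, [.,.]_Π) is an almost Lie algebroid. -/
/-- Algebraic model of a skew algebroid over a base manifold: `R` plays the role of
the ring of smooth functions, `G` the module of sections of the anchored bundle,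
`bracket` the skew-symmetric bracket satisfying the Leibniz rule, and `anchor`
gives the action of sections on functions by derivations. -/
structure SkewAlgebroid (R : Type*) [CommRing R] (G : Type*)
    [AddCommGroup G] [Module R G] where
  bracket : G → G → G
  anchor : G → R → R
  bracket_add_left : ∀ a b c, bracket (a + b) c = bracket a c + bracket b c
  bracket_skew : ∀ a b, bracket a b = - bracket b a
  anchor_add : ∀ a b φ, anchor (a + b) φ = anchor a φ + anchor b φ
  anchor_smul : ∀ (φ : R) a ψ, anchor (φ • a) ψ = φ * anchor a ψ
  anchor_map_add : ∀ a φ ψ, anchor a (φ + ψ) = anchor a φ + anchor a ψ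
  anchor_map_mul : ∀ a φ ψ, anchor a (φ * ψ) = φ * anchor a ψ + ψ * anchor a φ
  leibniz : ∀ a (φ : R) b, bracket a (φ • b) = φ • bracket a b + anchor a φ • b

namespace SkewAlgebroid

variable {R : Type*} [CommRing R] {G : Type*} [AddCommGroup G] [Module R G]

/-- The bivector field associated to a sharp map `♯ : A* → A`: `Π(α,β) = β(♯α)`. -/
def biv (sharp : (G →ₗ[R] R) → G) (α β : G →ₗ[R] R) : R := β (sharp α)

/-- `♯_{Π,ξ}(α) = ♯_Π(α) + α(ξ)ξ`. -/
def sharpJ (sharp : (G →ₗ[R] R) → G) (ξ : G) (α : G →ₗ[R] R) : G := sharp α + α ξ • ξ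

/-- `(ξ ∧ Π)(α,β,γ)`. -/
def wedgeVB (ξ : G) (sharp : (G →ₗ[R] R) → G) (α β γ : G →ₗ[R] R) : R :=
  α ξ * biv sharp β γ - β ξ * biv sharp α γ + γ ξ * biv sharp α β

variable (S : SkewAlgebroid R G)

lemma bracket_add_right (a b c : G) :
    S.bracket a (b + c) = S.bracket a b + S.bracket a c := by
  rw [S.bracket_skew a (b + c), S.bracket_add_left, S.bracket_skew b a, S.bracket_skew c a]
  abel

/-- The Lie `A`-derivative of a 1-form along a section. -/
def lieDeriv (a : G) (α : G →ₗ[R] R) : G →ₗ[R] R where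
  toFun b := S.anchor a (α b) - α (S.bracket a b)
  map_add' b c := by
    try dsimp only
    rw [map_add, S.anchor_map_add, S.bracket_add_right, map_add]; ring
  map_smul' φ b := by
    try dsimp only
    rw [map_smul, smul_eq_mul, S.anchor_map_mul, S.leibniz, map_add, map_smul, map_smul,
      smul_eq_mul, smul_eq_mul, RingHom.id_apply, smul_eq_mul]
    ring

/-- The exterior `A`-differential of a function, as a 1-form. -/
def dform (φ : R) : G →ₗ[R] R where
  toFun a := S.anchor a φ
  map_add' a b := S.anchor_add a b φ
  map_smul' c a := by try dsimp only
                      rw [S.anchor_smul]; rfl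

/-- The exterior `A`-differential of a 1-form. -/
def dOne (η : G →ₗ[R] R) (a b : G) : R :=
  S.anchor a (η b) - S.anchor b (η a) - η (S.bracket a b)

/-- The exterior `A`-differential of a 2-form. -/
def dTwo (Ω : G →ₗ[R] G →ₗ[R] R) (a b c : G) : R :=
  S.anchor a (Ω b c) - S.anchor b (Ω a c) + S.anchor c (Ω a b)
    - Ω (S.bracket a b) c + Ω (S.bracket a c) b - Ω (S.bracket b c) a

/-- The Lie `A`-derivative of a 2-form along a section. -/
def lieTwo (ξ : G) (Ω : G →ₗ[R] G →ₗ[R] R) (a b : G) : R :=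
  S.anchor ξ (Ω a b) - Ω (S.bracket ξ a) b - Ω a (S.bracket ξ b)

/-- The Koszul bracket of 1-forms associated with the bivector field given by `sharp`:
`[α,β]_Π = L_{♯α}β − L_{♯β}α − d_ρ(Π(α,β))`. -/
def koszul (sharp : (G →ₗ[R] R) → G) (α β : G →ₗ[R] R) : G →ₗ[R] R :=
  S.lieDeriv (sharp α) β - S.lieDeriv (sharp β) α - S.dform (biv sharp α β)

/-- The Schouten–Nijenhuis bracket `[Π,Π]`, defined (as in the contravariant calculus)
by `[Π,Π] = −d_{ρ_Π}Π` via the structure `(ρ_Π, [.,.]_Π)` on the dual. -/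
def schouten (sharp : (G →ₗ[R] R) → G) (α β γ : G →ₗ[R] R) : R :=
  -(S.anchor (sharp α) (biv sharp β γ) - S.anchor (sharp β) (biv sharp α γ)
      + S.anchor (sharp γ) (biv sharp α β)
      - biv sharp (S.koszul sharp α β) γ + biv sharp (S.koszul sharp α γ) β
      - biv sharp (S.koszul sharp β γ) α)

/-- The Lie `A`-derivative `L^ρ_ξ Π` of the bivector field. -/
def lieBiv (ξ : G) (sharp : (G →ₗ[R] R) → G) (α β : G →ₗ[R] R) : R :=
  S.anchor ξ (biv sharp α β) - biv sharp (S.lieDeriv ξ α) β - biv sharp α (S.lieDeriv ξ β)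

/-- The deformed dual bracket `[α,β]^λ_{Π,ξ}`. -/
def bracketJ (sharp : (G →ₗ[R] R) → G) (ξ : G) (lam : G →ₗ[R] R) (α β : G →ₗ[R] R) :
    G →ₗ[R] R :=
  S.koszul sharp α β + α ξ • (S.lieDeriv ξ β - β) - β ξ • (S.lieDeriv ξ α - α)
    - biv sharp α β • lam

/-- The anchor is a bracket morphism (almost Lie algebroid condition). -/
def IsAlmostLie : Prop := ∀ a b φ,
  S.anchor (S.bracket a b) φ = S.anchor a (S.anchor b φ) - S.anchor b (S.anchor a φ)

/-- The Jacobi identity for the bracket (Lie algebroid condition). -/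
def IsJacobi : Prop := ∀ a b c,
  S.bracket (S.bracket a b) c + S.bracket (S.bracket b c) a + S.bracket (S.bracket c a) b = 0

end SkewAlgebroid

open SkewAlgebroid

variable {R : Type*} [CommRing R] {G : Type*} [AddCommGroup G] [Module R G]

/-! With `Π` skew, `Π([α,β]_Π, γ)` is the anchor part `ρ_Π(α)Π(β,γ) − ρ_Π(β)Π(α,γ) + ρ_Π(γ)Π(α,β)`
of `d_{ρ_Π}Π(α,β,γ)` plus the two bracket terms `β[♯α,♯γ] − α[♯β,♯γ]`. Substituting this into the
three Koszul terms of `[Π,Π] = −d_{ρ_Π}Π`, the anchor parts combine to twice the anchor part and the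
bracket terms to twice `−γ[♯α,♯β]`, which is exactly `2 γ(♯[α,β]_Π − [♯α,♯β])`. Evaluating the
torsion on `γ = d_ρ φ` gives the almost Lie property of the dual. -/

namespace SkewAlgebroid

lemma anchor_map_neg (S : SkewAlgebroid R G) (a : G) (φ : R) :
    S.anchor a (-φ) = -S.anchor a φ :=
  (AddMonoidHom.mk' (S.anchor a) (S.anchor_map_add a)).map_neg φ

lemma anchor_eq_of_forall_form_eq (S : SkewAlgebroid R G) {a b : G}
    (h : ∀ γ : G →ₗ[R] R, γ a = γ b) (φ : R) : S.anchor a φ = S.anchor b φ :=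
  h (S.dform φ)

lemma form_bracket_swap (S : SkewAlgebroid R G) (η : G →ₗ[R] R) (a b : G) :
    η (S.bracket b a) = -η (S.bracket a b) := by
  rw [S.bracket_skew, map_neg]

lemma koszul_apply (S : SkewAlgebroid R G) (sharp : (G →ₗ[R] R) → G) (α β : G →ₗ[R] R) (c : G) :
    S.koszul sharp α β c =
      S.anchor (sharp α) (β c) - β (S.bracket (sharp α) c)
        - (S.anchor (sharp β) (α c) - α (S.bracket (sharp β) c))
        - S.anchor c (biv sharp α β) :=
  rfl

section SkewBivector

variable (S : SkewAlgebroid R G) {sharp : (G →ₗ[R] R) → G}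
  (hskew : ∀ α β : G →ₗ[R] R, α (sharp β) = -β (sharp α))
include hskew

lemma biv_swap (α β : G →ₗ[R] R) : biv sharp β α = -biv sharp α β :=
  hskew α β

lemma biv_koszul (α β γ : G →ₗ[R] R) :
    biv sharp (S.koszul sharp α β) γ =
      S.anchor (sharp α) (biv sharp β γ) - S.anchor (sharp β) (biv sharp α γ)
        + S.anchor (sharp γ) (biv sharp α β)
        + β (S.bracket (sharp α) (sharp γ)) - α (S.bracket (sharp β) (sharp γ)) := by
  have hα : α (sharp γ) = -biv sharp α γ := hskew α γ
  have hβ : β (sharp γ) = -biv sharp β γ := hskew β γ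
  rw [biv, hskew, koszul_apply, hα, hβ, S.anchor_map_neg, S.anchor_map_neg]
  ring

lemma schouten_eq_torsion_add_torsion (α β γ : G →ₗ[R] R) :
    S.schouten sharp α β γ =
      γ (sharp (S.koszul sharp α β) - S.bracket (sharp α) (sharp β))
        + γ (sharp (S.koszul sharp α β) - S.bracket (sharp α) (sharp β)) := by
  rw [map_sub, schouten, ← biv, S.biv_koszul hskew, S.biv_koszul hskew, S.biv_koszul hskew,
    biv_swap hskew γ β, biv_swap hskew γ α, biv_swap hskew β α, S.form_bracket_swap γ (sharp α),
    S.form_bracket_swap α (sharp β), S.form_bracket_swap β (sharp α), S.anchor_map_neg, S.anchor_map_neg,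
    S.anchor_map_neg]
  ring

end SkewBivector

end SkewAlgebroid

/-- torsion of the dual skew algebroid of a bivector field:
`γ(♯_Π([α,β]_Π) − [♯_Π α, ♯_Π β]) = (1/2)[Π,Π](α,β,γ)`, and if `[Π,Π]=0` and the
algebroid is almost Lie, the dual structure `(A*, ρ_Π, [.,.]_Π)` is almost Lie. -/
theorem koszul_torsion_and_almostLie [Algebra ℝ R]
    (S : SkewAlgebroid R G) (sharp : (G →ₗ[R] R) → G)
    (hskew : ∀ α β : G →ₗ[R] R, α (sharp β) = - β (sharp α)) :
    (∀ α β γ : G →ₗ[R] R,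
        γ (sharp (S.koszul sharp α β) - S.bracket (sharp α) (sharp β))
          = (1/2 : ℝ) • S.schouten sharp α β γ)
    ∧ ((∀ α β γ : G →ₗ[R] R, S.schouten sharp α β γ = 0) → S.IsAlmostLie →
        ∀ (α β : G →ₗ[R] R) (φ : R),
          S.anchor (sharp (S.koszul sharp α β)) φ
            = S.anchor (sharp α) (S.anchor (sharp β) φ)
              - S.anchor (sharp β) (S.anchor (sharp α) φ)) := by
  have htorsion : ∀ α β γ : G →ₗ[R] R,
      γ (sharp (S.koszul sharp α β) - S.bracket (sharp α) (sharp β))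
        = (1/2 : ℝ) • S.schouten sharp α β γ := fun α β γ => by
    rw [S.schouten_eq_torsion_add_torsion hskew, ← two_smul ℝ, one_div,
      inv_smul_smul₀ two_ne_zero]
  refine ⟨htorsion, fun hschouten hAL α β φ => ?_⟩
  have hsharp : ∀ γ : G →ₗ[R] R,
      γ (sharp (S.koszul sharp α β)) = γ (S.bracket (sharp α) (sharp β)) := fun γ => by
    rw [← sub_eq_zero, ← map_sub, htorsion, hschouten, smul_zero]
  rw [S.anchor_eq_of_forall_form_eq hsharp, hAL]
end

section
/- Let (A, ρ, [.,.], g) be a pseudo-Riemannian skew algebroid, Π a bivector field and ξ a vector field on A with L^ρ_ξΠ = 0. Let λ = g(ξ,ξ)♭_g(ξ) − ♭_g(Jξ) and suppose the triple (Π, ξ, g) is compatible, i.e. the contravariant Levi-Civita connection D of (A*, ρ_{Π,ξ}, [.,.]^g_{Π,ξ}, g*) satisfies DΠ(α,β,γ) = (1/2)(γ(ξ)Π(α,β) − β(ξ)Π(α,γ) − J*γ(ξ)g*(α,β) + J*β(ξ)g*(α,γ)). Then (Π, ξ) is a Jacobi structure if and only if (ξ − ♯_Π(λ)) ∧ Π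 = 0. -/
open SkewAlgebroid

variable {R : Type*} [CommRing R] {G : Type*} [AddCommGroup G] [Module R G]

/-!
Since `D` is torsion-free, the alternating sum `(D_αΠ)(β,γ) − (D_βΠ)(α,γ) + (D_γΠ)(α,β)` is the
differential of `Π` in the deformed algebroid `(A*, ρ_{Π,ξ}, [·,·]^λ_{Π,ξ})`, which, when
`L_ξΠ = 0`, equals `−[Π,Π] + 2 ξ∧Π + ♯_Π(λ)∧Π`. By compatibility the same sum is `ξ∧Π`, the
`g*`-terms cancelling by symmetry of `g*`. Hence `[Π,Π] = 2 ξ∧Π − (ξ − ♯_Π(λ))∧Π`.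
-/

namespace SkewAlgebroid

section Contravariant

variable (sharp : (G →ₗ[R] R) → G)

lemma wedgeVB_sub (v w : G) (α β γ : G →ₗ[R] R) :
    wedgeVB (v - w) sharp α β γ = wedgeVB v sharp α β γ - wedgeVB w sharp α β γ := by
  simp only [wedgeVB, map_sub]
  ring

/-- `d Π` for the anchor `ρ` and the bracket `B` on 1-forms. -/
def dBiv (ρ : (G →ₗ[R] R) → R → R) (B : (G →ₗ[R] R) → (G →ₗ[R] R) → G →ₗ[R] R)
    (α β γ : G →ₗ[R] R) : R :=
  ρ α (biv sharp β γ) - ρ β (biv sharp α γ) + ρ γ (biv sharp α β)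
    - biv sharp (B α β) γ + biv sharp (B α γ) β - biv sharp (B β γ) α

/-- `(D_α Π)(β, γ)` for a connection `D` on 1-forms with anchor `ρ`. -/
def covDerivBiv (ρ : (G →ₗ[R] R) → R → R) (D : (G →ₗ[R] R) → (G →ₗ[R] R) → G →ₗ[R] R)
    (α β γ : G →ₗ[R] R) : R :=
  ρ α (biv sharp β γ) - biv sharp (D α β) γ - biv sharp β (D α γ)

variable {sharp}

lemma covDerivBiv_alternate_eq_dBiv (hskew : ∀ α β : G →ₗ[R] R, α (sharp β) = - β (sharp α))
    (ρ : (G →ₗ[R] R) → R → R) {D B : (G →ₗ[R] R) → (G →ₗ[R] R) → G →ₗ[R] R}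
    (hD : ∀ α β, D α β - D β α = B α β) (α β γ : G →ₗ[R] R) :
    covDerivBiv sharp ρ D α β γ - covDerivBiv sharp ρ D β α γ + covDerivBiv sharp ρ D γ α β
      = dBiv sharp ρ B α β γ := by
  simp only [covDerivBiv, dBiv, ← hD, biv]
  simp only [hskew _ (_ - _), LinearMap.sub_apply]
  simp only [hskew (D _ _)]
  ring

lemma covDerivBiv_alternate_of_compat [Algebra ℝ R]
    (hskew : ∀ α β : G →ₗ[R] R, α (sharp β) = - β (sharp α)) (ξ : G)
    (gs : (G →ₗ[R] R) → (G →ₗ[R] R) → R) (hgs : ∀ α β, gs α β = gs β α)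
    (Js : (G →ₗ[R] R) → (G →ₗ[R] R)) (ρ : (G →ₗ[R] R) → R → R)
    (D : (G →ₗ[R] R) → (G →ₗ[R] R) → G →ₗ[R] R)
    (hcompat : ∀ α β γ, covDerivBiv sharp ρ D α β γ
      = (1/2 : ℝ) • (γ ξ * biv sharp α β - β ξ * biv sharp α γ
          - Js γ ξ * gs α β + Js β ξ * gs α γ))
    (α β γ : G →ₗ[R] R) :
    covDerivBiv sharp ρ D α β γ - covDerivBiv sharp ρ D β α γ + covDerivBiv sharp ρ D γ α β
      = wedgeVB ξ sharp α β γ := by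
  rw [hcompat, hcompat, hcompat, ← smul_sub, ← smul_add]
  have hsum : γ ξ * biv sharp α β - β ξ * biv sharp α γ - Js γ ξ * gs α β + Js β ξ * gs α γ
      - (γ ξ * biv sharp β α - α ξ * biv sharp β γ - Js γ ξ * gs β α + Js α ξ * gs β γ)
      + (β ξ * biv sharp γ α - α ξ * biv sharp γ β - Js β ξ * gs γ α + Js α ξ * gs γ β)
      = (2 : ℝ) • wedgeVB ξ sharp α β γ := by
    simp only [wedgeVB, biv, two_smul]
    linear_combination -γ ξ * hskew β α + β ξ * hskew γ α - α ξ * hskew γ β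
      - Js γ ξ * hgs α β + Js β ξ * hgs α γ - Js α ξ * hgs β γ
  rw [hsum, smul_smul]
  norm_num

lemma dBiv_sharpJ_bracketJ (S : SkewAlgebroid R G)
    (hskew : ∀ α β : G →ₗ[R] R, α (sharp β) = - β (sharp α)) {ξ : G}
    (hL : ∀ α β : G →ₗ[R] R, S.lieBiv ξ sharp α β = 0) (lam α β γ : G →ₗ[R] R) :
    dBiv sharp (fun α => S.anchor (sharpJ sharp ξ α)) (S.bracketJ sharp ξ lam) α β γ
      = - S.schouten sharp α β γ + 2 * wedgeVB ξ sharp α β γ + wedgeVB (sharp lam) sharp α β γ := by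
  simp only [lieBiv, biv] at hL
  simp only [dBiv, schouten, wedgeVB, sharpJ, bracketJ, biv, S.anchor_add, S.anchor_smul]
  simp only [hskew _ (S.koszul _ _ _), hskew _ (_ - _), hskew _ (S.lieDeriv _ _),
    LinearMap.sub_apply, LinearMap.add_apply, LinearMap.smul_apply, smul_eq_mul] at hL ⊢
  simp only [hskew lam]
  linear_combination α ξ * hL β γ - β ξ * hL α γ + γ ξ * hL α β
    - α ξ * hskew β γ + β ξ * hskew α γ - γ ξ * hskew β α

end Contravariant

end SkewAlgebroid

theorem jacobi_iff_wedge_vanishes_general [Algebra ℝ R]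
    (S : SkewAlgebroid R G) (sharp : (G →ₗ[R] R) → G)
    (hskew : ∀ α β : G →ₗ[R] R, α (sharp β) = - β (sharp α))
    (ξ : G)
    (hL : ∀ α β : G →ₗ[R] R, S.lieBiv ξ sharp α β = 0)
    (gb : G →ₗ[R] G →ₗ[R] R) (hgb_symm : ∀ a b : G, gb a b = gb b a)
    (eg : G ≃ₗ[R] (G →ₗ[R] R))
    (J : G → G)
    (Js : (G →ₗ[R] R) → (G →ₗ[R] R))
    (D : (G →ₗ[R] R) → (G →ₗ[R] R) → (G →ₗ[R] R))
    (hD_torsionfree : ∀ α β, D α β - D β α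
      = S.bracketJ sharp ξ (gb ξ ξ • eg ξ - eg (J ξ)) α β)
    (hcompat : ∀ α β γ : G →ₗ[R] R,
      S.anchor (sharpJ sharp ξ α) (biv sharp β γ)
          - biv sharp (D α β) γ - biv sharp β (D α γ)
        = (1/2 : ℝ) • (γ ξ * biv sharp α β - β ξ * biv sharp α γ
            - Js γ ξ * gb (eg.symm α) (eg.symm β)
            + Js β ξ * gb (eg.symm α) (eg.symm γ))) :
    ((∀ α β γ : G →ₗ[R] R, S.schouten sharp α β γ = 2 * wedgeVB ξ sharp α β γ)
        ∧ (∀ α β : G →ₗ[R] R, S.lieBiv ξ sharp α β = 0))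
    ↔ (∀ α β γ : G →ₗ[R] R,
        wedgeVB (ξ - sharp (gb ξ ξ • eg ξ - eg (J ξ))) sharp α β γ = 0) := by
  set lam := gb ξ ξ • eg ξ - eg (J ξ)
  have key : ∀ α β γ, S.schouten sharp α β γ
      = 2 * wedgeVB ξ sharp α β γ - wedgeVB (ξ - sharp lam) sharp α β γ := by
    intro α β γ
    have hcycle := covDerivBiv_alternate_eq_dBiv hskew
      (fun α => S.anchor (sharpJ sharp ξ α)) hD_torsionfree α β γ
    rw [covDerivBiv_alternate_of_compat hskew ξ (fun α β => gb (eg.symm α) (eg.symm β))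
      (fun _ _ => hgb_symm _ _) Js _ D hcompat, dBiv_sharpJ_bracketJ S hskew hL] at hcycle
    rw [wedgeVB_sub]
    linear_combination hcycle
  refine ⟨fun ⟨hJacobi, _⟩ α β γ => ?_, fun hwedge => ⟨fun α β γ => ?_, hL⟩⟩
  · linear_combination key α β γ - hJacobi α β γ
  · linear_combination key α β γ - hwedge α β γ

/-- for a compatible triple `(Π,ξ,g)` with `L_ξΠ = 0` and
`λ = g(ξ,ξ)♭_g(ξ) − ♭_g(Jξ)`, the pair `(Π,ξ)` is a Jacobi structure iff
`(ξ − ♯_Π(λ)) ∧ Π = 0`. -/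
theorem jacobi_iff_wedge_vanishes [Algebra ℝ R]
    (S : SkewAlgebroid R G) (sharp : (G →ₗ[R] R) → G)
    (hskew : ∀ α β : G →ₗ[R] R, α (sharp β) = - β (sharp α))
    (ξ : G)
    (hL : ∀ α β : G →ₗ[R] R, S.lieBiv ξ sharp α β = 0)
    (gb : G →ₗ[R] G →ₗ[R] R) (hgb_symm : ∀ a b : G, gb a b = gb b a)
    (eg : G ≃ₗ[R] (G →ₗ[R] R)) (heg : ∀ a b : G, eg a b = gb a b)
    (J : G → G)
    (hJ : ∀ α β : G →ₗ[R] R, gb (J (eg.symm α)) (eg.symm β) = biv sharp α β)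
    (Js : (G →ₗ[R] R) → (G →ₗ[R] R))
    (hJs : ∀ α β : G →ₗ[R] R, gb (eg.symm (Js α)) (eg.symm β) = biv sharp α β)
    (D : (G →ₗ[R] R) → (G →ₗ[R] R) → (G →ₗ[R] R))
    (hD_torsionfree : ∀ α β, D α β - D β α
      = S.bracketJ sharp ξ (gb ξ ξ • eg ξ - eg (J ξ)) α β)
    (hD_metric : ∀ α β γ,
      S.anchor (sharpJ sharp ξ α) (gb (eg.symm β) (eg.symm γ))
        = gb (eg.symm (D α β)) (eg.symm γ) + gb (eg.symm β) (eg.symm (D α γ)))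
    (hcompat : ∀ α β γ : G →ₗ[R] R,
      S.anchor (sharpJ sharp ξ α) (biv sharp β γ)
          - biv sharp (D α β) γ - biv sharp β (D α γ)
        = (1/2 : ℝ) • (γ ξ * biv sharp α β - β ξ * biv sharp α γ
            - Js γ ξ * gb (eg.symm α) (eg.symm β)
            + Js β ξ * gb (eg.symm α) (eg.symm γ))) :
    ((∀ α β γ : G →ₗ[R] R, S.schouten sharp α β γ = 2 * wedgeVB ξ sharp α β γ)
        ∧ (∀ α β : G →ₗ[R] R, S.lieBiv ξ sharp α β = 0))
    ↔ (∀ α β γ : G →ₗ[R] R,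
        wedgeVB (ξ - sharp (gb ξ ξ • eg ξ - eg (J ξ))) sharp α β γ = 0) :=
  jacobi_iff_wedge_vanishes_general S sharp hskew ξ hL gb hgb_symm eg J Js D hD_torsionfree hcompat
end
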